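/- arXiv:math/0401312 — 3 statements merged into one kernel-verified Lean document; each statement's English description precedes it below -/
import Mathlib

section
/- Every countably presented flat module has projective dimension at most 1. -/
/-!
Present `M` by countably many generators and relations. By the equational criterion, a map from a
finite free module to `M` factors through another finite free module in a way that kills any
finitely many prescribed elements of its kernel. Alternately covering one more generator and
killing what one more relation forces to vanish gives finite free modules `F₀ → F₁ → ⋯` over `M`
whose colimit is `M`. For a sequential colimit the telescope
`0 → ⨁ Fₙ --(1 - shift)--> ⨁ Fₙ → M → 0` is exact, and `⨁ Fₙ` is projective.
-/

def IsFlatModule (R M : Type*) [Ring R] [AddCommGroup M] [Module R M] : Prop :=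
  ∀ (k : ℕ) (r : Fin k → R) (m : Fin k → M), (∑ i, r i • m i) = 0 →
    ∃ (l : ℕ) (a : Fin k → Fin l → R) (y : Fin l → M),
      (∀ i, m i = ∑ j, a i j • y j) ∧ ∀ j, (∑ i, r i * a i j) = 0

universe u v w w'

open Submodule Set Filter

def HasTwoTermProjectiveResolution (R : Type*) [Ring R] (M : Type*) [AddCommGroup M]
    [Module R M] : Prop :=
  ∃ (P₁ P₀ : Type w) (_ : AddCommGroup P₁) (_ : AddCommGroup P₀)
    (_ : Module R P₁) (_ : Module R P₀),
    Module.Projective R P₁ ∧ Module.Projective R P₀ ∧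
    ∃ (ι : P₁ →ₗ[R] P₀) (π : P₀ →ₗ[R] M),
      Function.Injective ι ∧ Function.Surjective π ∧ LinearMap.range ι = LinearMap.ker π

theorem HasTwoTermProjectiveResolution.ulift {R : Type*} [Ring R] {M : Type*} [AddCommGroup M]
    [Module R M] (h : HasTwoTermProjectiveResolution.{w} R M) :
    HasTwoTermProjectiveResolution.{max w w'} R M := by
  obtain ⟨P₁, P₀, _, _, _, _, h₁, h₀, ι, π, hι, hπ, hιπ⟩ := h
  let e₁ : ULift.{w'} P₁ ≃ₗ[R] P₁ := ULift.moduleEquiv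
  let e₀ : ULift.{w'} P₀ ≃ₗ[R] P₀ := ULift.moduleEquiv
  refine ⟨ULift P₁, ULift P₀, _, _, _, _, .of_equiv e₁.symm, .of_equiv e₀.symm,
    e₀.symm.toLinearMap ∘ₗ ι ∘ₗ e₁.toLinearMap, π ∘ₗ e₀.toLinearMap,
    e₀.symm.injective.comp (hι.comp e₁.injective), hπ.comp e₀.surjective, ?_⟩
  rw [LinearMap.range_comp, LinearMap.range_comp_of_range_eq_top _ e₁.range, hιπ,
    LinearMap.ker_comp, Submodule.map_equiv_eq_comap_symm, e₀.symm_symm]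

section Factorization

variable {R : Type*} [Ring R] {M : Type*} [AddCommGroup M] [Module R M]

theorem IsFlatModule.exists_factorization_of_apply_eq_zero (hM : IsFlatModule R M) {k : ℕ}
    (p : (Fin k → R) →ₗ[R] M) {x : Fin k → R} (hx : p x = 0) :
    ∃ (l : ℕ) (T : (Fin k → R) →ₗ[R] Fin l → R) (q : (Fin l → R) →ₗ[R] M),
      q ∘ₗ T = p ∧ T x = 0 := by
  classical
  obtain ⟨l, a, y, hy, ha⟩ := hM k x _ ((p.pi_apply_eq_sum_univ x).symm.trans hx)
  refine ⟨l, Fintype.linearCombination R a, Fintype.linearCombination R y, ?_, ?_⟩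
  · refine LinearMap.pi_ext' fun i => LinearMap.ext_ring ?_
    have hsingle : (Pi.single i 1 : Fin k → R) = fun j => if i = j then 1 else 0 := by
      ext j
      simp [Pi.single_apply, eq_comm]
    simp [Fintype.linearCombination_apply, hsingle, hy i]
  · ext j
    simpa [Fintype.linearCombination_apply] using ha j

theorem IsFlatModule.exists_factorization_of_fg_le_ker (hM : IsFlatModule R M) {k : ℕ}
    (p : (Fin k → R) →ₗ[R] M) {K : Submodule R (Fin k → R)} (hK : K.FG)
    (hKp : K ≤ LinearMap.ker p) :
    ∃ (l : ℕ) (T : (Fin k → R) →ₗ[R] Fin l → R) (q : (Fin l → R) →ₗ[R] M),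
      q ∘ₗ T = p ∧ K ≤ LinearMap.ker T := by
  classical
  obtain ⟨s, rfl⟩ := hK
  simp only [span_le] at hKp ⊢
  induction s using Finset.induction_on with
  | empty => exact ⟨k, LinearMap.id, p, rfl, by simp⟩
  | insert a s _ ih =>
    simp only [Finset.coe_insert, insert_subset_iff] at hKp ⊢
    obtain ⟨l, T, q, hqT, hs⟩ := ih hKp.2
    have hTa : q (T a) = 0 := by rw [← LinearMap.comp_apply, hqT]; exact hKp.1
    obtain ⟨l', T', q', hqT', hTa'⟩ := hM.exists_factorization_of_apply_eq_zero q hTa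
    refine ⟨l', T' ∘ₗ T, q', by rw [← LinearMap.comp_assoc, hqT', hqT], hTa', fun x hx => ?_⟩
    simp [LinearMap.mem_ker.1 (hs hx)]

end Factorization

section Telescope

open DirectSum

variable {R : Type*} [Ring R] {F : ℕ → Type w} [∀ n, AddCommGroup (F n)] [∀ n, Module R (F n)]
  (t : ∀ n, F n →ₗ[R] F (n + 1))

inductive IsEventuallyZero : ∀ n, F n → Prop
  | zero (n : ℕ) : IsEventuallyZero n 0
  | of_succ {n : ℕ} {x : F n} : IsEventuallyZero (n + 1) (t n x) → IsEventuallyZero n x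

def telescopeShift : (⨁ n, F n) →ₗ[R] ⨁ n, F n :=
  toModule R ℕ _ fun n => lof R ℕ F (n + 1) ∘ₗ t n

theorem telescopeShift_lof (n : ℕ) (x : F n) :
    telescopeShift t (lof R ℕ F n x) = lof R ℕ F (n + 1) (t n x) :=
  toModule_lof R n x

theorem telescopeShift_apply_zero (x : ⨁ n, F n) : telescopeShift t x 0 = 0 := by
  induction x using DirectSum.induction_on with
  | zero => simp
  | of n x => rw [← lof_eq_of R, telescopeShift_lof, lof_eq_of, of_eq_of_ne _ _ _ (by omega)]
  | add x y hx hy => rw [map_add, DirectSum.add_apply, hx, hy, add_zero]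

theorem telescopeShift_apply_succ (x : ⨁ n, F n) (n : ℕ) :
    telescopeShift t x (n + 1) = t n (x n) := by
  induction x using DirectSum.induction_on with
  | zero => simp
  | of m x =>
    rw [← lof_eq_of R, telescopeShift_lof, lof_eq_of, lof_eq_of]
    obtain rfl | hmn := eq_or_ne m n
    · simp
    · rw [of_eq_of_ne _ _ _ (by omega), of_eq_of_ne _ _ _ hmn.symm, map_zero]
  | add x y hx hy => rw [map_add, DirectSum.add_apply, DirectSum.add_apply, hx, hy, map_add]

theorem injective_id_sub_telescopeShift :
    Function.Injective (LinearMap.id - telescopeShift t : (⨁ n, F n) →ₗ[R] ⨁ n, F n) := by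
  rw [← LinearMap.ker_eq_bot, LinearMap.ker_eq_bot' (f := LinearMap.id - telescopeShift t)]
  intro x hx
  have hfix : telescopeShift t x = x := (sub_eq_zero.1 hx).symm
  ext n
  induction n with
  | zero => rw [← hfix, telescopeShift_apply_zero, DirectSum.zero_apply]
  | succ n ih =>
    rw [← hfix, telescopeShift_apply_succ, ih, DirectSum.zero_apply, map_zero,
      DirectSum.zero_apply]

theorem lof_sub_lof_succ_mem_range (n : ℕ) (x : F n) :
    lof R ℕ F n x - lof R ℕ F (n + 1) (t n x) ∈ LinearMap.range (LinearMap.id - telescopeShift t) :=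
  ⟨lof R ℕ F n x, by simp [telescopeShift_lof]⟩

theorem exists_lof_sub_lof_mem_range {n m : ℕ} (hnm : n ≤ m) (x : F n) :
    ∃ y : F m,
      lof R ℕ F n x - lof R ℕ F m y ∈ LinearMap.range (LinearMap.id - telescopeShift t) := by
  induction m, hnm using Nat.le_induction with
  | base => exact ⟨x, by simp⟩
  | succ m _ ih =>
    obtain ⟨y, hy⟩ := ih
    exact ⟨t m y, by simpa using add_mem hy (lof_sub_lof_succ_mem_range t m y)⟩

theorem exists_sub_lof_mem_range (x : ⨁ n, F n) :
    ∃ n, ∃ y : F n, x - lof R ℕ F n y ∈ LinearMap.range (LinearMap.id - telescopeShift t) := by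
  induction x using DirectSum.induction_on with
  | zero => exact ⟨0, 0, by simp⟩
  | of n y => exact ⟨n, y, by simp [lof_eq_of]⟩
  | add x₁ x₂ h₁ h₂ =>
    obtain ⟨n₁, y₁, h₁⟩ := h₁
    obtain ⟨n₂, y₂, h₂⟩ := h₂
    obtain ⟨z₁, hz₁⟩ := exists_lof_sub_lof_mem_range t (le_max_left n₁ n₂) y₁
    obtain ⟨z₂, hz₂⟩ := exists_lof_sub_lof_mem_range t (le_max_right n₁ n₂) y₂
    refine ⟨max n₁ n₂, z₁ + z₂, ?_⟩
    convert add_mem (add_mem h₁ hz₁) (add_mem h₂ hz₂) using 1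
    rw [map_add]
    abel

theorem IsEventuallyZero.lof_mem_range {n : ℕ} {x : F n} (h : IsEventuallyZero t n x) :
    lof R ℕ F n x ∈ LinearMap.range (LinearMap.id - telescopeShift t) := by
  induction h with
  | zero n => simp
  | @of_succ n x _ ih => simpa using add_mem (lof_sub_lof_succ_mem_range t n x) ih

variable {M : Type*} [AddCommGroup M] [Module R M] {p : ∀ n, F n →ₗ[R] M}

theorem toModule_comp_telescopeShift (hp : ∀ n, p (n + 1) ∘ₗ t n = p n) :
    toModule R ℕ M p ∘ₗ telescopeShift t = toModule R ℕ M p := by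
  refine DirectSum.linearMap_ext R fun n => LinearMap.ext fun x => ?_
  simp [telescopeShift_lof, ← hp n]

theorem range_id_sub_telescopeShift_le_ker (hp : ∀ n, p (n + 1) ∘ₗ t n = p n) :
    LinearMap.range (LinearMap.id - telescopeShift t) ≤ LinearMap.ker (toModule R ℕ M p) := by
  rintro _ ⟨x, rfl⟩
  rw [LinearMap.mem_ker, LinearMap.sub_apply, map_sub, ← LinearMap.comp_apply _ (telescopeShift t),
    toModule_comp_telescopeShift t hp, LinearMap.id_apply, sub_self]

theorem range_id_sub_telescopeShift (hp : ∀ n, p (n + 1) ∘ₗ t n = p n)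
    (hvan : ∀ n x, p n x = 0 → IsEventuallyZero t n x) :
    LinearMap.range (LinearMap.id - telescopeShift t) = LinearMap.ker (toModule R ℕ M p) := by
  refine le_antisymm (range_id_sub_telescopeShift_le_ker t hp) fun x hx => ?_
  obtain ⟨n, y, hy⟩ := exists_sub_lof_mem_range t x
  have hpy : p n y = 0 := by
    have := range_id_sub_telescopeShift_le_ker t hp hy
    rwa [LinearMap.mem_ker, map_sub, hx, zero_sub, neg_eq_zero, toModule_lof] at this
  simpa using add_mem hy (hvan n y hpy).lof_mem_range

theorem surjective_toModule (hsurj : ⨆ n, LinearMap.range (p n) = ⊤) :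
    Function.Surjective (toModule R ℕ M p) := by
  rw [← LinearMap.range_eq_top, eq_top_iff, ← hsurj, iSup_le_iff]
  rintro n _ ⟨x, rfl⟩
  exact ⟨lof R ℕ F n x, toModule_lof R n x⟩

theorem hasTwoTermProjectiveResolution_of_telescope [∀ n, Module.Projective R (F n)]
    (hp : ∀ n, p (n + 1) ∘ₗ t n = p n) (hsurj : ⨆ n, LinearMap.range (p n) = ⊤)
    (hvan : ∀ n x, p n x = 0 → IsEventuallyZero t n x) :
    HasTwoTermProjectiveResolution.{w} R M :=
  ⟨⨁ n, F n, ⨁ n, F n, _, _, _, _, inferInstance, inferInstance, _, _,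
    injective_id_sub_telescopeShift t, surjective_toModule hsurj,
    range_id_sub_telescopeShift t hp hvan⟩

end Telescope

section Presentation

variable {R : Type*} [Semiring R] {N : Type*} [AddCommMonoid N] [Module R N]

theorem Submodule.FG.eventually_le_of_le_iSup {L : Submodule R N} (hL : L.FG)
    {S : ℕ → Submodule R N} (hS : Monotone S) (hLS : L ≤ ⨆ n, S n) :
    ∀ᶠ n in atTop, L ≤ S n := by
  obtain ⟨_, ⟨n, rfl⟩, hn⟩ :=
    (CompleteLattice.isCompactElement_iff_le_of_directed_sSup_le _ L).1 ((fg_iff_compact L).1 hL)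
      (Set.range S) (range_nonempty S) (directedOn_range.2 hS.directed_le) (by rwa [sSup_range])
  exact eventually_atTop.2 ⟨n, fun m hm => hn.trans (hS hm)⟩

theorem monotone_span_image_Iio (r : ℕ → N) : Monotone fun C => span R (r '' Iio C) :=
  fun _ _ h => span_mono (image_mono (Iio_subset_Iio h))

theorem iSup_span_image_Iio (r : ℕ → N) : ⨆ C, span R (r '' Iio C) = span R (range r) := by
  rw [← span_iUnion, ← image_iUnion, iUnion_Iio, image_univ]

theorem Submodule.FG.eventually_le_span_image_Iio {L : Submodule R N} (hL : L.FG) {r : ℕ → N}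
    (hLr : L ≤ span R (Set.range r)) : ∀ᶠ C in atTop, L ≤ span R (r '' Iio C) :=
  hL.eventually_le_of_le_iSup (monotone_span_image_Iio r) (by rwa [iSup_span_image_Iio])

theorem Set.Countable.exists_span_eq_span_range {S : Set N} (hS : S.Countable) :
    ∃ r : ℕ → N, span R S = span R (range r) := by
  obtain ⟨r, hr⟩ := (hS.insert 0).exists_eq_range (insert_nonempty 0 S)
  exact ⟨r, by rw [← hr, span_insert_zero]⟩

theorem LinearMap.range_eq_span_range_single {κ : Type*} (h : (κ →₀ R) →ₗ[R] N) :
    LinearMap.range h = span R (Set.range fun a => h (Finsupp.single a 1)) := by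
  have : Finsupp.linearCombination R (fun a => h (Finsupp.single a 1)) = h :=
    Finsupp.lhom_ext fun a b => by
      rw [Finsupp.linearCombination_single, ← map_smul, Finsupp.smul_single_one]
  rw [← Finsupp.range_linearCombination, this]

end Presentation

section NatPresentation

variable {R : Type*} [Ring R] {N : Type*} [AddCommGroup N] [Module R N]

theorem LinearMap.ker_comp_of_comp_eq_id {P : Type*} [AddCommGroup P] [Module R P]
    {M : Type*} [AddCommGroup M] [Module R M] (g : N →ₗ[R] M) {φ : P →ₗ[R] N} {ψ : N →ₗ[R] P}
    (h : φ ∘ₗ ψ = LinearMap.id) :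
    LinearMap.ker (g ∘ₗ φ) = (LinearMap.ker g).map ψ ⊔ LinearMap.range (LinearMap.id - ψ ∘ₗ φ) := by
  have hφψ (y : N) : φ (ψ y) = y := LinearMap.congr_fun h y
  refine le_antisymm (fun x hx => ?_) (sup_le ?_ ?_)
  · rw [← add_sub_cancel (ψ (φ x)) x]
    exact add_mem_sup (mem_map_of_mem hx) ⟨x, by simp⟩
  · rintro _ ⟨y, hy, rfl⟩
    simpa [hφψ] using hy
  · rintro _ ⟨x, rfl⟩
    simp [hφψ]

variable {M : Type*} [AddCommGroup M] [Module R M]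

theorem exists_nat_presentation {κ₀ κ₁ : Type*} [Countable κ₀] [Countable κ₁]
    (f : (κ₁ →₀ R) →ₗ[R] κ₀ →₀ R) (g : (κ₀ →₀ R) →ₗ[R] M) (hg : Function.Surjective g)
    (hfg : LinearMap.range f = LinearMap.ker g) :
    ∃ (g' : (ℕ →₀ R) →ₗ[R] M) (r : ℕ → ℕ →₀ R),
      Function.Surjective g' ∧ LinearMap.ker g' = span R (range r) := by
  obtain ⟨e, he⟩ := exists_injective_nat κ₀
  let φ : (ℕ →₀ R) →ₗ[R] κ₀ →₀ R := Finsupp.lcomapDomain (M := R) e he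
  let ψ : (κ₀ →₀ R) →ₗ[R] ℕ →₀ R := Finsupp.lmapDomain R R e
  have hφψ : φ ∘ₗ ψ = LinearMap.id :=
    LinearMap.ext (Finsupp.leftInverse_lcomapDomain_mapDomain (R := R) e he)
  let proj : (ℕ →₀ R) →ₗ[R] ℕ →₀ R := LinearMap.id - ψ ∘ₗ φ
  obtain ⟨r, hr⟩ := ((countable_range fun a => ψ (f (Finsupp.single a 1))).union
    (countable_range fun n => proj (Finsupp.single n 1))).exists_span_eq_span_range (R := R)
  refine ⟨g ∘ₗ φ, r, hg.comp fun y => ⟨ψ y, LinearMap.congr_fun hφψ y⟩, ?_⟩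
  rw [LinearMap.ker_comp_of_comp_eq_id g hφψ, ← hfg, ← LinearMap.range_comp,
    LinearMap.range_eq_span_range_single, LinearMap.range_eq_span_range_single, ← span_union]
  exact hr

end NatPresentation

section Coordinates

variable (R : Type*) [Semiring R]

noncomputable def extendByZero (n : ℕ) : (Fin n → R) →ₗ[R] ℕ →₀ R :=
  Finsupp.lmapDomain R R Fin.val ∘ₗ (Finsupp.linearEquivFunOnFinite R R (Fin n)).symm.toLinearMap

variable {R}

theorem injective_extendByZero (n : ℕ) : Function.Injective (extendByZero R n) :=
  (Finsupp.mapDomain_injective Fin.val_injective).comp (LinearEquiv.injective _)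

theorem range_extendByZero (n : ℕ) :
    LinearMap.range (extendByZero R n) = Finsupp.supported R R (Iio n) := by
  rw [extendByZero, LinearMap.range_comp_of_range_eq_top _ (LinearEquiv.range _),
    LinearMap.range_eq_map, ← Finsupp.supported_univ, Finsupp.lmapDomain_supported, image_univ,
    Fin.range_val]

theorem monotone_range_extendByZero :
    Monotone fun n => LinearMap.range (extendByZero R n) := fun _ _ h => by
  simpa only [range_extendByZero] using Finsupp.supported_mono (Iio_subset_Iio h)

theorem iSup_range_extendByZero : ⨆ n, LinearMap.range (extendByZero R n) = ⊤ := by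
  simp_rw [range_extendByZero, ← Finsupp.supported_iUnion, iUnion_Iio, Finsupp.supported_univ]

theorem Submodule.FG.eventually_le_range_extendByZero {L : Submodule R (ℕ →₀ R)} (hL : L.FG) :
    ∀ᶠ n in atTop, L ≤ LinearMap.range (extendByZero R n) :=
  hL.eventually_le_of_le_iSup monotone_range_extendByZero
    (iSup_range_extendByZero (R := R) ▸ le_top)

end Coordinates

theorem Module.Projective.exists_comp_eq_of_range_le {R : Type*} [Semiring R] {P N N' : Type*}
    [AddCommMonoid P] [Module R P] [Module.Projective R P] [AddCommMonoid N] [Module R N]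
    [AddCommMonoid N'] [Module R N'] {f : N →ₗ[R] N'} {w : P →ₗ[R] N'}
    (h : LinearMap.range w ≤ LinearMap.range f) : ∃ v : P →ₗ[R] N, f ∘ₗ v = w := by
  obtain ⟨v, hv⟩ := Module.projective_lifting_property f.rangeRestrict
    (w.codRestrict (LinearMap.range f) fun x => h ⟨x, rfl⟩) f.surjective_rangeRestrict
  exact ⟨v, LinearMap.ext fun x => congr_arg Subtype.val (LinearMap.congr_fun hv x)⟩

section Construction

variable {R : Type u} [Ring R] {M : Type v} [AddCommGroup M] [Module R M]
  (g : (ℕ →₀ R) →ₗ[R] M) (r : ℕ → ℕ →₀ R)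

structure FreeApproximation where
  k : ℕ
  p : (Fin k → R) →ₗ[R] M
  w : (Fin k → R) →ₗ[R] ℕ →₀ R
  g_comp_w : g ∘ₗ w = p
  C : ℕ

structure FreeApproximation.Transition (s s' : FreeApproximation g) where
  t : (Fin s.k → R) →ₗ[R] Fin s'.k → R
  p_comp_t : s'.p ∘ₗ t = s.p
  kills : (span R (r '' Iio s.C)).comap s.w ≤ LinearMap.ker t
  defect : LinearMap.range (s'.w ∘ₗ t - s.w) ≤ span R (r '' Iio s'.C)
  C_le : s.C ≤ s'.C

variable {g r}

theorem FreeApproximation.exists_transition (hM : IsFlatModule R M) (hg : Function.Surjective g)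
    (hr : LinearMap.ker g = span R (range r)) (s : FreeApproximation g) (b : ℕ) :
    ∃ (s' : FreeApproximation g) (_ : s.Transition g r s'),
      b ≤ s'.C ∧ ∀ i < b, g (Finsupp.single i 1) ∈ LinearMap.range s'.p := by
  -- Flatness only kills finitely generated submodules. The elements that the first `C` relations
  -- force to vanish form one after passing to a coordinate module `Fin n → R`, which embeds in
  -- `ℕ →₀ R`.
  have hrC : (span R (r '' Iio s.C)).FG := fg_span ((finite_Iio _).image r)
  obtain ⟨n, hbn, hwn, hrn⟩ := ((eventually_ge_atTop b).and
    ((fg_range s.w).eventually_le_range_extendByZero.and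
      hrC.eventually_le_range_extendByZero)).exists
  obtain ⟨wc, hwc⟩ := Module.Projective.exists_comp_eq_of_range_le hwn
  let K := (span R (r '' Iio s.C)).comap (extendByZero R n)
  have hK : K.FG :=
    fg_of_fg_map_injective _ (injective_extendByZero n) (by rwa [map_comap_eq_self hrn])
  have hKg : K ≤ LinearMap.ker (g ∘ₗ extendByZero R n) := by
    rw [LinearMap.ker_comp, hr]
    exact comap_mono (span_mono (image_subset_range _ _))
  obtain ⟨l, T, q, hqT, hKT⟩ := hM.exists_factorization_of_fg_le_ker _ hK hKg
  obtain ⟨w', hw'⟩ := Module.Projective.exists_comp_eq_of_range_le (f := g) (w := q)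
    (by rw [LinearMap.range_eq_top.2 hg]; exact le_top)
  have hdefect : LinearMap.range (w' ∘ₗ T ∘ₗ wc - s.w) ≤ span R (range r) := by
    rw [← hr, LinearMap.range_le_ker_iff, LinearMap.comp_sub, ← LinearMap.comp_assoc, hw',
      ← LinearMap.comp_assoc, hqT, LinearMap.comp_assoc, hwc, sub_self]
  obtain ⟨C', hbC', hCC', hC'⟩ := ((eventually_ge_atTop b).and ((eventually_ge_atTop s.C).and
    ((fg_range _).eventually_le_span_image_Iio hdefect))).exists
  refine ⟨⟨l, q, w', hw', C'⟩, ⟨T ∘ₗ wc, ?_, fun x hx => hKT ?_, hC', hCC'⟩, hbC', fun i hi => ?_⟩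
  · rw [← LinearMap.comp_assoc, hqT, LinearMap.comp_assoc, hwc, s.g_comp_w]
  · simpa [K, ← hwc] using hx
  · obtain ⟨c, hc⟩ : Finsupp.single i 1 ∈ LinearMap.range (extendByZero R n) := by
      rw [range_extendByZero]
      exact Finsupp.single_mem_supported R 1 (hi.trans_le hbn)
    exact ⟨T c, by rw [← LinearMap.comp_apply, hqT, LinearMap.comp_apply, hc]⟩

theorem exists_freeApproximation_sequence (hM : IsFlatModule R M) (hg : Function.Surjective g)
    (hr : LinearMap.ker g = span R (range r)) :
    ∃ (s : ℕ → FreeApproximation g) (_ : ∀ n, (s n).Transition g r (s (n + 1))),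
      (∀ n, n ≤ (s n).C) ∧ ∀ i, g (Finsupp.single i 1) ∈ LinearMap.range (s (i + 1)).p := by
  choose next T hC hsurj using FreeApproximation.exists_transition hM hg hr
  let s : ℕ → FreeApproximation g := fun n =>
    Nat.rec ⟨0, 0, 0, LinearMap.comp_zero g, 0⟩ (fun n s => next s (n + 1)) n
  refine ⟨s, fun n => T (s n) (n + 1), fun n => ?_,
    fun i => hsurj (s i) (i + 1) i i.lt_succ_self⟩
  cases n with
  | zero => exact Nat.zero_le _
  | succ n => exact hC (s n) (n + 1)

theorem FreeApproximation.isEventuallyZero_of_apply_eq_zero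
    (hr : LinearMap.ker g = span R (range r)) {s : ℕ → FreeApproximation g}
    (T : ∀ n, (s n).Transition g r (s (n + 1))) (hC : ∀ n, n ≤ (s n).C)
    {n : ℕ} {x : Fin (s n).k → R} (hx : (s n).p x = 0) :
    IsEventuallyZero (fun n => (T n).t) n x := by
  obtain ⟨i, hi⟩ : ∃ i, (s n).w x ∈ span R (r '' Iio i) := by
    have hxr : (s n).w x ∈ span R (range r) := by
      rw [← hr, LinearMap.mem_ker, ← LinearMap.comp_apply, (s n).g_comp_w, hx]
    obtain ⟨i, hi⟩ := ((fg_span_singleton _).eventually_le_span_image_Iio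
      ((span_singleton_le_iff_mem _ _).2 hxr)).exists
    exact ⟨i, (span_singleton_le_iff_mem _ _).1 hi⟩
  -- Along the sequence the lift of `x` stays in the span of the first `max i C` relations,
  -- and the first transition with `i ≤ C` kills it.
  suffices key : ∀ d m (y : Fin (s m).k → R), i ≤ m + d →
      (s m).w y ∈ span R (r '' Iio (max i (s m).C)) → IsEventuallyZero (fun n => (T n).t) m y from
    key i n x (by omega) (monotone_span_image_Iio r (le_max_left _ _) hi)
  intro d
  induction d with
  | zero =>
    intro m y him hy
    rw [max_eq_right (by have := hC m; omega)] at hy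
    refine .of_succ ?_
    rw [LinearMap.mem_ker.1 ((T m).kills hy)]
    exact .zero _
  | succ d ih =>
    intro m y him hy
    refine .of_succ (ih (m + 1) _ (by omega) ?_)
    simpa using add_mem (monotone_span_image_Iio r (le_max_right i _) ((T m).defect ⟨y, rfl⟩))
      (monotone_span_image_Iio r (max_le_max le_rfl (T m).C_le) hy)

theorem hasTwoTermProjectiveResolution_of_nat_presentation (hM : IsFlatModule R M)
    (hg : Function.Surjective g) (hr : LinearMap.ker g = span R (range r)) :
    HasTwoTermProjectiveResolution.{u} R M := by
  obtain ⟨s, T, hC, hsurj⟩ := exists_freeApproximation_sequence hM hg hr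
  refine hasTwoTermProjectiveResolution_of_telescope (fun n => (T n).t) (p := fun n => (s n).p)
    (fun n => (T n).p_comp_t) ?_
    fun n x hx => FreeApproximation.isEventuallyZero_of_apply_eq_zero hr T hC hx
  rw [eq_top_iff, ← LinearMap.range_eq_top.2 hg, LinearMap.range_eq_span_range_single, span_le]
  rintro _ ⟨i, rfl⟩
  exact mem_iSup_of_mem (i + 1) (hsurj i)

end Construction

/-- Every countably presented flat module has projective dimension at most `1`:
there is a short exact sequence `0 → P₁ → P₀ → M → 0` with `P₀`, `P₁` projective. -/
theorem stmt8 (R : Type u) [Ring R] (M : Type v) [AddCommGroup M] [Module R M]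
    (hflat : IsFlatModule R M)
    (hcp : ∃ (κ₀ κ₁ : Type) (_ : Countable κ₀) (_ : Countable κ₁)
      (f : (κ₁ →₀ R) →ₗ[R] (κ₀ →₀ R)) (g : (κ₀ →₀ R) →ₗ[R] M),
      Function.Surjective g ∧ LinearMap.range f = LinearMap.ker g) :
    ∃ (P₁ P₀ : Type (max u v)) (_ : AddCommGroup P₁) (_ : AddCommGroup P₀)
      (_ : Module R P₁) (_ : Module R P₀),
      Module.Projective R P₁ ∧ Module.Projective R P₀ ∧
      ∃ (ι : P₁ →ₗ[R] P₀) (π : P₀ →ₗ[R] M),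
        Function.Injective ι ∧ Function.Surjective π ∧
        LinearMap.range ι = LinearMap.ker π := by
  obtain ⟨κ₀, κ₁, _, _, f, g, hg, hfg⟩ := hcp
  obtain ⟨g', r, hg', hr⟩ := exists_nat_presentation f g hg hfg
  exact (hasTwoTermProjectiveResolution_of_nat_presentation hflat hg' hr).ulift
end

section
/- A finitely generated torsion-free virtually solvable group of Hirsch length 1 is infinite cyclic. -/
open Subgroup

section Aux

lemma tf_pow_ne {K : Type*} [Group K] (htf : ∀ g : K, g ≠ 1 → ¬ IsOfFinOrder g)
    {g : K} {c : ℤ} (hc : c ≠ 0) (h : g ^ c = 1) : g = 1 := by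
  by_contra hg
  refine htf g hg (isOfFinOrder_iff_pow_eq_one.mpr ⟨c.natAbs, Int.natAbs_pos.mpr hc, ?_⟩)
  rcases Int.natAbs_eq c with hh | hh
  · rw [← zpow_natCast, ← hh, h]
  · rw [← zpow_natCast, ← neg_neg (c.natAbs : ℤ), ← hh, zpow_neg, h, inv_one]

lemma cyclic_aux {K : Type*} [Group K] (hfg : Group.FG K)
    (htf : ∀ g : K, g ≠ 1 → ¬ IsOfFinOrder g)
    (hcomm : ∀ a b : K, a * b = b * a)
    (hdep : ∀ a b : K, ∃ m k : ℤ, (m ≠ 0 ∨ k ≠ 0) ∧ a ^ m = b ^ k)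
    (hnt : ∃ a : K, a ≠ 1) :
    ∃ u : K, ∀ x : K, x ∈ Subgroup.zpowers u := by
  letI : CommGroup K := { (inferInstance : Group K) with mul_comm := hcomm }
  letI M := Additive K
  haveI : Module.Finite ℤ M := Module.Finite.iff_addGroup_fg.mpr (GroupFG.iff_add_fg.mp hfg)
  haveI : NoZeroSMulDivisors ℤ M := by
    constructor
    intro c x h
    by_cases hc : c = 0
    · exact Or.inl hc
    · refine Or.inr ?_
      have : (Additive.toMul x) ^ c = 1 := by
        rw [← toMul_zsmul, h]; rfl
      exact tf_pow_ne htf hc this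
  haveI : Module.Free ℤ M := Module.free_of_finite_type_torsion_free'
  set ι := Module.Free.ChooseBasisIndex ℤ M with hι
  let b : Module.Basis ι ℤ M := Module.Free.chooseBasis ℤ M
  haveI : Nonempty ι := by
    by_contra h
    haveI : IsEmpty ι := not_nonempty_iff.mp h
    haveI : Subsingleton M := b.repr.toEquiv.subsingleton
    obtain ⟨a, ha⟩ := hnt
    exact ha (Subsingleton.elim (Additive.ofMul a) (Additive.ofMul 1))
  haveI : Subsingleton ι := by
    constructor
    intro i j
    by_contra hij
    obtain ⟨m, k, hmk, hpow⟩ := hdep (Additive.toMul (b i)) (Additive.toMul (b j))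
    have hsm : m • b i = k • b j := by
      have := congrArg Additive.ofMul hpow
      simpa [ofMul_zpow] using this
    have h1 := congrArg (fun v => b.repr v i) hsm
    have h2 := congrArg (fun v => b.repr v j) hsm
    simp only [map_zsmul, Module.Basis.repr_self, Finsupp.smul_apply, Finsupp.single_eq_same,
      Finsupp.single_eq_of_ne hij, Finsupp.single_eq_of_ne (Ne.symm hij), smul_zero,
      smul_eq_mul, mul_one, mul_zero] at h1 h2
    rcases hmk with hm | hk
    · exact hm h1
    · exact hk h2.symm
  haveI : Unique ι := uniqueOfSubsingleton (Classical.arbitrary ι)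
  refine ⟨Additive.toMul (b default), fun x => ?_⟩
  refine mem_zpowers_iff.mpr ⟨b.repr (Additive.ofMul x) default, ?_⟩
  have : (b.repr (Additive.ofMul x) default) • b default = Additive.ofMul x := by
    rw [← Module.Basis.repr_symm_single, ← Finsupp.unique_single (b.repr (Additive.ofMul x))]
    exact b.repr.symm_apply_apply _
  have := congrArg Additive.toMul this
  exact this






open scoped commutatorElement in
lemma step_aux {K : Type*} [Group K] (hfg : Group.FG K)
    (htf : ∀ g : K, g ≠ 1 → ¬ IsOfFinOrder g)
    (t : K) (ht : t ≠ 1)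
    (hN : ∀ g : K, ∀ x ∈ Subgroup.zpowers t, g * x * g⁻¹ ∈ Subgroup.zpowers t)
    (hI : (Subgroup.zpowers t).index ≠ 0) :
    ∃ u : K, ∀ x : K, x ∈ Subgroup.zpowers u := by
  have hinj : Function.Injective fun c : ℤ => t ^ c :=
    injective_zpow_iff_not_isOfFinOrder.mpr (htf t ht)
  haveI hNormal : (Subgroup.zpowers t).Normal := ⟨fun x hx g => hN g x hx⟩
  set N := (Subgroup.zpowers t).index with hNdef
  have hpow : ∀ g : K, g ^ N ∈ Subgroup.zpowers t := fun g =>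
    (Subgroup.zpowers t).pow_index_mem g
  -- dichotomy
  have hdich : ∀ g : K, g * t * g⁻¹ = t ∨ g * t * g⁻¹ = t⁻¹ := by
    intro g
    obtain ⟨m, hm⟩ := mem_zpowers_iff.mp (hN g t (mem_zpowers t))
    obtain ⟨l, hl⟩ := mem_zpowers_iff.mp (hN g⁻¹ t (mem_zpowers t))
    rw [inv_inv] at hl
    have key : t ^ (m * l) = t ^ (1 : ℤ) := by
      rw [zpow_one, zpow_mul]
      calc (t ^ m) ^ l = (g * t * g⁻¹) ^ l := by rw [hm]
        _ = g * t ^ l * g⁻¹ := by rw [conj_zpow]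
        _ = g * (g⁻¹ * t * g) * g⁻¹ := by rw [hl]
        _ = t := by group
    have hml : m * l = 1 := hinj key
    have : m = 1 ∨ m = -1 := Int.isUnit_iff.mp (IsUnit.of_mul_eq_one l hml)
    rcases this with h | h
    · left; rw [← hm, h, zpow_one]
    · right; rw [← hm, h, zpow_neg, zpow_one]
  -- t is central
  have hcent : ∀ g : K, g * t = t * g := by
    intro g
    rcases hdich g with h | h
    · exact mul_inv_eq_iff_eq_mul.mp h
    · exfalso
      -- g inverts t
      have hg2 : (g * g) * t * (g * g)⁻¹ = t := by
        calc (g * g) * t * (g * g)⁻¹ = g * (g * t * g⁻¹) * g⁻¹ := by group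
          _ = g * t⁻¹ * g⁻¹ := by rw [h]
          _ = (g * t * g⁻¹)⁻¹ := by group
          _ = t⁻¹⁻¹ := by rw [h]
          _ = t := inv_inv t
      obtain ⟨r, hr⟩ := mem_zpowers_iff.mp (hpow (g * g))
      have hcomm2 : g * (g * g) ^ N * g⁻¹ = (g * g) ^ N := by
        have hc : Commute g ((g * g) ^ N) :=
          ((Commute.refl g).mul_right (Commute.refl g)).pow_right N
        rw [hc.eq, mul_inv_cancel_right]
      have hconj : g * t ^ r * g⁻¹ = t ^ (-r) := by
        calc g * t ^ r * g⁻¹ = (g * t * g⁻¹) ^ r := (conj_zpow ..).symm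
          _ = (t⁻¹) ^ r := by rw [h]
          _ = t ^ (-r) := by rw [inv_zpow, zpow_neg]
      have : t ^ r = t ^ (-r) := by
        rw [← hconj, hr, hcomm2, ← hr]
      have hr0 : r = 0 := by
        have := hinj this
        omega
      have hgg : (g * g) ^ N = 1 := by rw [← hr, hr0, zpow_zero]
      have hgg' : g ^ (2 * N) = 1 := by
        rw [← pow_two, ← pow_mul] at hgg
        exact hgg
      have hg1 : g = 1 := by
        by_contra hgne
        exact htf g hgne (isOfFinOrder_iff_pow_eq_one.mpr
          ⟨2 * N, by omega, hgg'⟩)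
      rw [hg1] at h
      simp at h
      exact htf t ht (isOfFinOrder_iff_pow_eq_one.mpr ⟨2, two_pos, by
        rw [pow_two]; exact mul_eq_one_iff_eq_inv.mpr h⟩)
  -- center has finite index
  have hle : Subgroup.zpowers t ≤ Subgroup.center K :=
    zpowers_le.mpr (Subgroup.mem_center_iff.mpr fun g => hcent g)
  haveI : (Subgroup.center K).FiniteIndex :=
    ⟨ne_zero_of_dvd_ne_zero hI (Subgroup.index_dvd_of_le hle)⟩
  -- K is abelian via the transfer homomorphism
  have hcomm : ∀ a b : K, a * b = b * a := by
    intro a b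
    rw [← commutatorElement_eq_one_iff_mul_comm]
    set f := MonoidHom.transferCenterPow K with hf
    have hfc : f ⁅a, b⁆ = 1 := by
      rw [commutatorElement_def]
      simp only [map_mul, map_inv]
      have : ∀ x y : Subgroup.center K, x * y * x⁻¹ * y⁻¹ = 1 := fun x y => by
        rw [show x * y = y * x from Subtype.ext (Subgroup.mem_center_iff.mp y.2 x)]; group
      exact this (f a) (f b)
    have : (⁅a, b⁆ : K) ^ (Subgroup.center K).index = 1 := by
      have := congrArg (Subtype.val) hfc
      rwa [MonoidHom.transferCenterPow_apply] at this
    by_contra hne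
    exact htf _ hne (isOfFinOrder_iff_pow_eq_one.mpr
      ⟨(Subgroup.center K).index, Nat.pos_of_ne_zero Subgroup.FiniteIndex.index_ne_zero, this⟩)
  -- rank-one dependence
  have hdep : ∀ a b : K, ∃ m k : ℤ, (m ≠ 0 ∨ k ≠ 0) ∧ a ^ m = b ^ k := by
    intro a b
    obtain ⟨p, hp⟩ := mem_zpowers_iff.mp (hpow a)
    obtain ⟨q, hq⟩ := mem_zpowers_iff.mp (hpow b)
    have hN0 : (N : ℤ) ≠ 0 := Int.natCast_ne_zero.mpr hI
    by_cases hp0 : p = 0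
    · have ha1 : a = 1 := by
        refine tf_pow_ne htf hN0 ?_
        rw [zpow_natCast, ← hp, hp0, zpow_zero]
      exact ⟨N, 0, Or.inl hN0, by rw [ha1, one_zpow, zpow_zero]⟩
    · have h1 : a ^ ((N : ℤ) * q) = t ^ (p * q) := by
        rw [zpow_mul, zpow_natCast, ← hp, ← zpow_mul]
      have h2 : b ^ ((N : ℤ) * p) = t ^ (p * q) := by
        rw [zpow_mul, zpow_natCast, ← hq, ← zpow_mul, mul_comm q p]
      exact ⟨(N : ℤ) * q, (N : ℤ) * p,
        Or.inr (mul_ne_zero hN0 hp0), h1.trans h2.symm⟩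
  exact cyclic_aux hfg htf hcomm hdep ⟨t, ht⟩






lemma subgroup_eq_zpowers {G : Type*} [Group G] (S : Subgroup G) (u : S)
    (hu : ∀ x : S, x ∈ Subgroup.zpowers u) : S = Subgroup.zpowers (u : G) := by
  ext x
  constructor
  · intro hx
    obtain ⟨k, hk⟩ := mem_zpowers_iff.mp (hu ⟨x, hx⟩)
    refine mem_zpowers_iff.mpr ⟨k, ?_⟩
    have := congrArg (Subtype.val) hk
    simpa using this
  · intro hx
    obtain ⟨k, hk⟩ := mem_zpowers_iff.mp hx
    rw [← hk]
    exact Subgroup.zpow_mem S u.2 k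

/-- A finitely generated torsion-free group with a subnormal series of finite
length whose factors are finite or abelian, with exactly one infinite factor,
that factor being of torsion-free rank `1`, is infinite cyclic.
(Infinite factors are detected by `relindex = 0`.) -/
theorem stmt13 (G : Type*) [Group G] (hfg : Group.FG G)
    (htf : ∀ g : G, g ≠ 1 → ¬ IsOfFinOrder g)
    (n : ℕ) (s : Fin (n + 1) → Subgroup G)
    (h0 : s 0 = ⊥) (htop : s (Fin.last n) = ⊤)
    (hmono : ∀ i : Fin n, s i.castSucc ≤ s i.succ)
    (hnorm : ∀ i : Fin n, ∀ g ∈ s i.succ, ∀ x ∈ s i.castSucc, g * x * g⁻¹ ∈ s i.castSucc)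
    (hfac : ∀ i : Fin n, (s i.castSucc).relIndex (s i.succ) ≠ 0 ∨
      ∀ a ∈ s i.succ, ∀ b ∈ s i.succ, a * b * a⁻¹ * b⁻¹ ∈ s i.castSucc)
    (hone : ∃! i : Fin n, (s i.castSucc).relIndex (s i.succ) = 0)
    (hrank : ∀ i : Fin n, (s i.castSucc).relIndex (s i.succ) = 0 →
      (∀ a ∈ s i.succ, ∀ b ∈ s i.succ,
        ∃ m k : ℤ, (m ≠ 0 ∨ k ≠ 0) ∧ a ^ m * (b ^ k)⁻¹ ∈ s i.castSucc) ∧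
      ∃ a ∈ s i.succ, ∀ m : ℤ, m ≠ 0 → a ^ m ∉ s i.castSucc) :
    Nonempty (G ≃* Multiplicative ℤ) := by
  haveI := hfg
  obtain ⟨j, hj0, hjuniq⟩ := hone
  have hne : ∀ i : Fin n, i ≠ j → (s i.castSucc).relIndex (s i.succ) ≠ 0 :=
    fun i hij h => hij (hjuniq i h)
  -- index of the groups above the infinite factor is finite
  have hidx : ∀ m : Fin (n + 1), (j : ℕ) < (m : ℕ) → (s m).index ≠ 0 := by
    intro m
    induction m using Fin.reverseInduction with
    | last => intro _; rw [htop, Subgroup.index_top]; exact one_ne_zero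
    | cast i ih =>
      intro hji
      rw [Fin.coe_castSucc] at hji
      have h1 : (j : ℕ) < (i.succ : ℕ) := by rw [Fin.val_succ]; omega
      have hij : i ≠ j := fun h => by rw [h] at hji; omega
      rw [← Subgroup.relIndex_mul_index (hmono i)]
      exact mul_ne_zero (hne i hij) (ih h1)
  -- groups below the infinite factor are finite
  have hcard : ∀ m : Fin (n + 1), (m : ℕ) ≤ (j : ℕ) → Nat.card (s m) ≠ 0 := by
    intro m
    induction m using Fin.induction with
    | zero => intro _; rw [h0, Subgroup.card_bot]; exact one_ne_zero
    | succ i ih =>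
      intro hij
      rw [Fin.val_succ] at hij
      have hii : (i.castSucc : ℕ) ≤ (j : ℕ) := by rw [Fin.coe_castSucc]; omega
      have hijne : i ≠ j := fun h => by rw [h] at hij; omega
      have e : Nat.card ((s i.castSucc).subgroupOf (s i.succ)) = Nat.card (s i.castSucc) :=
        Nat.card_congr (Subgroup.subgroupOfEquivOfLe (hmono i)).toEquiv
      rw [← Subgroup.card_mul_index ((s i.castSucc).subgroupOf (s i.succ))]
      have hrel : ((s i.castSucc).subgroupOf (s i.succ)).index
          = (s i.castSucc).relIndex (s i.succ) := rfl
      rw [hrel, e]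
      exact mul_ne_zero (ih hii) (hne i hijne)
  -- the group below the infinite factor is trivial
  have hjbot : s j.castSucc = ⊥ := by
    have hfin : Finite (s j.castSucc) :=
      (Nat.card_ne_zero.mp (hcard j.castSucc (by rw [Fin.coe_castSucc]))).2
    rw [Subgroup.eq_bot_iff_forall]
    intro x hx
    by_contra hx1
    obtain ⟨c, hc, hc1⟩ := (isOfFinOrder_of_finite (⟨x, hx⟩ : s j.castSucc)).exists_pow_eq_one
    have : x ^ c = 1 := by
      have := congrArg (Subtype.val) hc1
      simpa using this
    exact htf x hx1 (isOfFinOrder_iff_pow_eq_one.mpr ⟨c, hc, this⟩)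
  -- main induction up the series
  have hmain : ∀ m : Fin (n + 1), (j : ℕ) < (m : ℕ) →
      ∃ u : G, u ≠ 1 ∧ s m = Subgroup.zpowers u := by
    intro m
    induction m using Fin.induction with
    | zero => intro h; simp at h
    | succ i ih =>
      intro hji
      rw [Fin.val_succ] at hji
      haveI : (s i.succ).FiniteIndex := ⟨hidx i.succ (by rw [Fin.val_succ]; omega)⟩
      have hKfg : Group.FG (s i.succ) := Subgroup.fg_of_index_ne_zero _
      have hKtf : ∀ g : (s i.succ), g ≠ 1 → ¬ IsOfFinOrder g := by
        intro g hg hfo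
        obtain ⟨c, hc, h1⟩ := hfo.exists_pow_eq_one
        have hcG : (g : G) ^ c = 1 := by
          have := congrArg (Subtype.val) h1
          simpa using this
        have hgG : (g : G) ≠ 1 := fun h => hg (Subtype.ext h)
        exact htf _ hgG (isOfFinOrder_iff_pow_eq_one.mpr ⟨c, hc, hcG⟩)
      rcases Nat.lt_or_ge (j : ℕ) (i : ℕ) with hcase | hcase
      · -- step case : the factor is finite, apply step_aux
        obtain ⟨u, hu1, huz⟩ := ih (by rw [Fin.coe_castSucc]; omega)
        have humem : u ∈ s i.castSucc := by rw [huz]; exact mem_zpowers u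
        have humemS : u ∈ s i.succ := hmono i humem
        set t : (s i.succ) := ⟨u, humemS⟩ with htdef
        have hzp : ∀ x : (s i.succ), x ∈ Subgroup.zpowers t ↔ (x : G) ∈ s i.castSucc := by
          intro x
          constructor
          · intro hx
            obtain ⟨k, hk⟩ := mem_zpowers_iff.mp hx
            have := congrArg (Subtype.val) hk
            simp only [SubgroupClass.coe_zpow] at this
            rw [← this]
            exact Subgroup.zpow_mem _ humem k
          · intro hx
            rw [huz] at hx
            obtain ⟨k, hk⟩ := mem_zpowers_iff.mp hx
            exact mem_zpowers_iff.mpr ⟨k, Subtype.ext (by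
              simp only [SubgroupClass.coe_zpow]; exact hk)⟩
        have hijne : i ≠ j := fun h => by rw [h] at hcase; omega
        obtain ⟨u', hu'⟩ := step_aux hKfg hKtf t
          (fun h => hu1 (congrArg Subtype.val h))
          (by
            intro g x hx
            refine (hzp _).mpr ?_
            have : ((g * x * g⁻¹ : s i.succ) : G) = (g : G) * x * (g : G)⁻¹ := by
              simp
            rw [this]
            exact hnorm i g g.2 x ((hzp x).mp hx))
          (by
            have heq : Subgroup.zpowers t = (s i.castSucc).subgroupOf (s i.succ) := by
              ext x
              rw [hzp, Subgroup.mem_subgroupOf]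
            rw [heq]
            exact hne i hijne)
        refine ⟨(u' : G), ?_, subgroup_eq_zpowers _ u' hu'⟩
        intro h
        have : u' = 1 := Subtype.ext h
        rw [this] at hu'
        have ht1 := hu' t
        simp only [Subgroup.zpowers_one_eq_bot, Subgroup.mem_bot] at ht1
        exact hu1 (congrArg Subtype.val ht1)
      · -- base case : i = j
        have hij : i = j := Fin.ext (by omega)
        subst hij
        obtain ⟨hdepG, a, haS, hapow⟩ := hrank i hj0
        have hcommG : ∀ a ∈ s i.succ, ∀ b ∈ s i.succ, a * b * a⁻¹ * b⁻¹ ∈ s i.castSucc := by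
          rcases hfac i with h | h
          · exact absurd hj0 h
          · exact h
        have hane : a ≠ 1 := by
          intro h
          refine hapow 1 one_ne_zero ?_
          rw [h, one_zpow, hjbot]
          exact Subgroup.mem_bot.mpr rfl
        obtain ⟨u, hu⟩ := cyclic_aux (K := s i.succ) hKfg hKtf
          (by
            intro x y
            have hc := hcommG x x.2 y y.2
            rw [hjbot, Subgroup.mem_bot] at hc
            have hG : (x : G) * y = y * x := by
              rw [← commutatorElement_eq_one_iff_mul_comm, commutatorElement_def]
              exact hc
            exact Subtype.ext (by simp only [Subgroup.coe_mul]; exact hG))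
          (by
            intro x y
            obtain ⟨m, k, hmk, hmem⟩ := hdepG x x.2 y y.2
            rw [hjbot, Subgroup.mem_bot, mul_inv_eq_one] at hmem
            exact ⟨m, k, hmk, Subtype.ext (by
              simp only [SubgroupClass.coe_zpow]; exact hmem)⟩)
          ⟨⟨a, haS⟩, fun h => hane (congrArg Subtype.val h)⟩
        refine ⟨(u : G), ?_, subgroup_eq_zpowers _ u hu⟩
        intro h
        have : u = 1 := Subtype.ext h
        rw [this] at hu
        have := hu ⟨a, haS⟩
        simp only [Subgroup.zpowers_one_eq_bot, Subgroup.mem_bot] at this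
        exact hane (congrArg Subtype.val this)
  obtain ⟨u, hu1, huz⟩ := hmain (Fin.last n) (by rw [Fin.val_last]; exact j.isLt)
  rw [htop] at huz
  have hord : ¬ IsOfFinOrder u := htf u hu1
  have hb : Function.Bijective (zpowersHom G u) := by
    constructor
    · intro x y hxy
      rw [zpowersHom_apply, zpowersHom_apply] at hxy
      have := injective_zpow_iff_not_isOfFinOrder.mpr hord hxy
      exact Multiplicative.toAdd.injective this
    · intro x
      have hx : x ∈ Subgroup.zpowers u := by rw [← huz]; trivial
      obtain ⟨k, hk⟩ := mem_zpowers_iff.mp hx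
      exact ⟨Multiplicative.ofAdd k, hk⟩
  exact ⟨(MulEquiv.ofBijective (zpowersHom G u) hb).symm⟩

end Aux
end

section
/- If G is a torsion-free group with a normal subgroup N free abelian of rank 2 and finite index such that G/N acts faithfully on N by conjugation, then [G : N] ≤ 2. -/
/-!
Conjugation makes `G` act `ℤ`-linearly on `N ≅ ℤ²`, and by faithfulness the kernel of this
representation `ρ` is `N`. For `g ∉ N`, the power `g ^ [G : N]` lies in `N`, is nontrivial by
torsion-freeness, and is fixed by `ρ g`; also `ρ g` has finite order. If `det (ρ g) = 1`, the fixed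
vector forces `tr (ρ g) = 2`, so `(ρ g - 1) ^ 2 = 0` by Cayley–Hamilton, and then
`(ρ g) ^ n = 1 + n • (ρ g - 1)` forces `ρ g = 1`, which is impossible. Hence `det ∘ ρ : G → ℤˣ`
has kernel exactly `N`, and `[G : N] ≤ |ℤˣ| = 2`.
-/

open Multiplicative

theorem one_add_pow_of_sq_eq_zero {R : Type*} [Semiring R] {x : R} (hx : x ^ 2 = 0) (n : ℕ) :
    (1 + x) ^ n = 1 + n • x := by
  induction n with
  | zero => simp
  | succ n ih =>
    rw [pow_succ, ih, add_mul, mul_add, smul_mul_assoc, mul_add, ← sq x, hx, succ_nsmul]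
    simp only [one_mul, mul_one, add_zero]
    abel

theorem eq_one_of_pow_eq_one_of_sq_sub_one_eq_zero {R : Type*} [Ring R] [IsAddTorsionFree R]
    {a : R} {n : ℕ} (hn : n ≠ 0) (ha : a ^ n = 1) (h : (a - 1) ^ 2 = 0) : a = 1 := by
  have := one_add_pow_of_sq_eq_zero h n
  rwa [add_sub_cancel, ha, left_eq_add, nsmul_eq_zero_iff_right hn, sub_eq_zero] at this

theorem Matrix.sq_sub_one_eq_zero_of_det_eq_one_of_mulVec_eq_self {R : Type*} [CommRing R]
    [IsDomain R] {A : Matrix (Fin 2) (Fin 2) R} (hdet : A.det = 1) {v : Fin 2 → R} (hv : v ≠ 0)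
    (hfix : A.mulVec v = v) : (A - 1) ^ 2 = 0 := by
  have hsing : (A - 1).det = 0 :=
    exists_mulVec_eq_zero_iff.mp ⟨v, hv, by rw [sub_mulVec, hfix, one_mulVec, sub_self]⟩
  have htrace : A.trace = 2 := by
    rw [det_fin_two] at hsing hdet
    simp only [sub_apply, one_apply_eq, one_apply_ne Fin.zero_ne_one,
      one_apply_ne Fin.zero_ne_one.symm, sub_zero] at hsing
    rw [trace_fin_two]
    linear_combination hdet - hsing
  have hCH : A ^ 2 - 2 * A + 1 = 0 := by
    simpa [charpoly_fin_two, htrace, hdet, map_ofNat] using A.aeval_self_charpoly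
  calc (A - 1) ^ 2 = A ^ 2 - 2 * A + 1 := by noncomm_ring
    _ = 0 := hCH

theorem LinearMap.eq_one_of_pow_eq_one_of_det_eq_one {R M : Type*} [CommRing R] [IsDomain R]
    [CharZero R] [AddCommGroup M] [Module R M] [Module.Free R M] [Module.Finite R M]
    (hM : Module.finrank R M = 2) {f : Module.End R M} {n : ℕ} (hn : n ≠ 0) (hf : f ^ n = 1)
    (hdet : f.det = 1) {v : M} (hv : v ≠ 0) (hfix : f v = v) : f = 1 := by
  let b := Module.finBasisOfFinrankEq R M hM
  have : IsAddTorsionFree (Matrix (Fin 2) (Fin 2) R) :=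
    inferInstanceAs (IsAddTorsionFree (Fin 2 → Fin 2 → R))
  apply (toMatrixAlgEquiv b).injective
  rw [map_one]
  refine eq_one_of_pow_eq_one_of_sq_sub_one_eq_zero hn (by rw [← map_pow, hf, map_one]) ?_
  refine Matrix.sq_sub_one_eq_zero_of_det_eq_one_of_mulVec_eq_self (v := b.repr v) ?_
    (by simpa using hv) ?_
  · change (toMatrix b b f).det = 1
    rw [det_toMatrix, hdet]
  · change (toMatrix b b f).mulVec _ = _
    rw [toMatrix_mulVec_repr, hfix]

def MulAut.toIntLinearEquiv (M : Type*) [AddCommGroup M] :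
    MulAut (Multiplicative M) →* (M ≃ₗ[ℤ] M) where
  toFun σ := AddEquiv.toIntLinearEquiv (M := M) (M₂ := M) (MulEquiv.toAdditive σ)
  map_one' := rfl
  map_mul' _ _ := rfl

section conjRep

variable {G M : Type*} [Group G] [AddCommGroup M] {N : Subgroup G} [N.Normal]

def conjRep (e : N ≃* Multiplicative M) : G →* (M ≃ₗ[ℤ] M) :=
  (MulAut.toIntLinearEquiv M).comp ((MulAut.congr e).toMonoidHom.comp MulAut.conjNormal)

theorem conjRep_apply (e : N ≃* Multiplicative M) (g : G) (x : N) :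
    conjRep e g (toAdd (e x)) = toAdd (e (MulAut.conjNormal g x)) :=
  congrArg (fun y => toAdd (e (MulAut.conjNormal g y))) (e.symm_apply_apply x)

theorem conjRep_eq_one_iff (e : N ≃* Multiplicative M) {g : G} :
    conjRep e g = 1 ↔ ∀ x ∈ N, g * x * g⁻¹ = x := by
  constructor
  · intro h x hx
    have := LinearEquiv.congr_fun h (toAdd (e ⟨x, hx⟩))
    rw [conjRep_apply, LinearEquiv.coe_one, id_eq, toAdd.injective.eq_iff,
      e.injective.eq_iff] at this
    exact congrArg Subtype.val this
  · intro h
    ext v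
    obtain ⟨x, rfl⟩ : ∃ x, toAdd (e x) = v := ⟨e.symm (ofAdd v), by simp⟩
    rw [conjRep_apply, LinearEquiv.coe_one, id_eq]
    congr 2
    exact Subtype.ext (h x x.2)

theorem conjRep_eq_one_of_mem (e : N ≃* Multiplicative M) {g : G} (hg : g ∈ N) :
    conjRep e g = 1 := by
  refine (conjRep_eq_one_iff e).2 fun x hx => ?_
  have : (⟨g, hg⟩ : N) * ⟨x, hx⟩ = ⟨x, hx⟩ * ⟨g, hg⟩ :=
    e.injective (by rw [map_mul, map_mul, mul_comm])
  rw [show g * x = x * g from congrArg Subtype.val this, mul_inv_cancel_right]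

theorem det_conjRep_ne_one [Module.Free ℤ M] [Module.Finite ℤ M] (hM : Module.finrank ℤ M = 2)
    (htf : ∀ g : G, g ≠ 1 → ¬ IsOfFinOrder g) [N.FiniteIndex] (e : N ≃* Multiplicative M)
    {g : G} (hg : g ∉ N) (hρ : conjRep e g ≠ 1) : LinearEquiv.det (conjRep e g) ≠ 1 := by
  have hk : N.index ≠ 0 := Subgroup.FiniteIndex.index_ne_zero
  let x : N := ⟨g ^ N.index, N.pow_index_mem g⟩
  have hx : x ≠ 1 := fun h => htf g (fun h1 => hg (h1 ▸ N.one_mem))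
    (isOfFinOrder_iff_pow_eq_one.2 ⟨N.index, Nat.pos_of_ne_zero hk, congrArg Subtype.val h⟩)
  have hfix : conjRep e g (toAdd (e x)) = toAdd (e x) := by
    rw [conjRep_apply]
    congr 2
    ext
    simp [x, MulAut.conjNormal_apply, (Commute.self_pow g N.index).eq]
  have hpow : (conjRep e g : M →ₗ[ℤ] M) ^ N.index = 1 := by
    rw [← LinearEquiv.automorphismGroup.toLinearMapMonoidHom_apply, ← map_pow, ← map_pow,
      conjRep_eq_one_of_mem e x.2, map_one]
  intro hdet
  refine hρ (LinearEquiv.toLinearMap_injective ?_)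
  exact LinearMap.eq_one_of_pow_eq_one_of_det_eq_one hM hk hpow
    (by rw [← LinearEquiv.coe_det, hdet, Units.val_one]) (by simpa using hx) hfix

end conjRep

/-- If `G` is torsion-free with a normal subgroup `N ≅ ℤ²` of finite index on
which `G/N` acts faithfully by conjugation, then `[G : N] ≤ 2`. -/
theorem stmt14 (G : Type*) [Group G]
    (htf : ∀ g : G, g ≠ 1 → ¬ IsOfFinOrder g)
    (N : Subgroup G) [N.Normal]
    (hN2 : Nonempty (↥N ≃* Multiplicative (ℤ × ℤ)))
    (hfin : N.FiniteIndex)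
    (hfaith : ∀ g : G, (∀ x ∈ N, g * x * g⁻¹ = x) → g ∈ N) :
    Nat.card (G ⧸ N) ≤ 2 := by
  obtain ⟨e⟩ := hN2
  let χ : G →* ℤˣ := LinearEquiv.det.comp (conjRep e)
  have hker : χ.ker = N := by
    ext g
    refine ⟨fun hdet => ?_, fun hg => ?_⟩
    · by_contra hg
      exact det_conjRep_ne_one (by simp) htf e hg
        (fun h => hg (hfaith g ((conjRep_eq_one_iff e).1 h))) hdet
    · rw [MonoidHom.mem_ker, MonoidHom.comp_apply, conjRep_eq_one_of_mem e hg, map_one]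
  calc Nat.card (G ⧸ N) = Nat.card χ.range := by rw [← Subgroup.index_ker, hker]; rfl
    _ ≤ Nat.card ℤˣ := Subgroup.card_le_card_group _
    _ = 2 := by rw [Nat.card_eq_fintype_card, Fintype.card_units_int]
end
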